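/- arXiv:2008.05990 — 2 statements merged into one kernel-verified Lean document; each statement's English description precedes it below -/
import Mathlib

section
/- Let V = (V_k, E_k) be a regular vine on a set with d elements. For every edge e ∈ E_k, the complete union U_e of e has exactly k + 1 elements. -/
open Finset

variable {α : Type*} [DecidableEq α] [Fintype α]

/-- The simple graph on `α` induced by a finite set of unordered pairs. -/
def graphOf (E : Finset (Sym2 α)) : SimpleGraph α where
  Adj x y := x ≠ y ∧ s(x, y) ∈ E
  symm := by
    constructor
    intro x y h
    refine ⟨h.1.symm, ?_⟩
    rw [Sym2.eq_swap]
    exact h.2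
  loopless := ⟨fun x h => h.1 rfl⟩

/-- `(V, E)` is a finite tree: edges join distinct vertices of `V`, the induced
graph is acyclic, and all vertices of `V` are mutually reachable. -/
def IsTreeOn (V : Finset α) (E : Finset (Sym2 α)) : Prop :=
  (∀ e ∈ E, ∀ x ∈ e, x ∈ V) ∧ (∀ e ∈ E, ¬ e.IsDiag) ∧
    (graphOf E).IsAcyclic ∧ ∀ x ∈ V, ∀ y ∈ V, (graphOf E).Reachable x y

/-- Complete union of an edge: the union of the complete unions of its endpoints
(each vertex of a tree of the vine is identified with its complete union). -/
def eUnion (e : Sym2 (Finset α)) : Finset α :=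
  Sym2.lift ⟨fun A B => A ∪ B, fun A B => union_comm A B⟩ e

/-- Conditioning set `D_e` of an edge. -/
def condSet (e : Sym2 (Finset α)) : Finset α :=
  Sym2.lift ⟨fun A B => A ∩ B, fun A B => inter_comm A B⟩ e

/-- Conditioned set `{a_e, b_e}` of an edge. -/
def condPair (e : Sym2 (Finset α)) : Finset α :=
  Sym2.lift ⟨fun A B => symmDiff A B, fun A B => symmDiff_comm A B⟩ e

/-- A regular vine on a finite set `α` of `d = Fintype.card α` elements.  The
vertices of tree `k` (for `k = 1, …, d-1`) are identified with their complete
unions, subsets of `α`; `V (k+1) = E k` is expressed via complete unions. -/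
structure RegularVine (α : Type*) [DecidableEq α] [Fintype α] where
  V : ℕ → Finset (Finset α)
  E : ℕ → Finset (Sym2 (Finset α))
  hV1 : V 1 = Finset.univ.image (fun a : α => ({a} : Finset α))
  hVsucc : ∀ k, 1 ≤ k → V (k + 1) = (E k).image eUnion
  tree : ∀ k, 1 ≤ k → k + 1 ≤ Fintype.card α → IsTreeOn (V k) (E k)
  hEzero : ∀ k, k = 0 ∨ Fintype.card α ≤ k → E k = ∅
  proximity : ∀ k, 1 ≤ k → ∀ p ∈ E (k + 1),
    ∃ a ∈ E k, ∃ b ∈ E k, p = s(eUnion a, eUnion b) ∧ ∃ v, v ∈ a ∧ v ∈ b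

/-- A tree `(V, E)` is a path: it is a tree and every vertex has degree at most 2. -/
def IsPathOn (V : Finset α) (E : Finset (Sym2 α)) : Prop :=
  IsTreeOn V E ∧ ∀ v ∈ V, (E.filter (fun e => v ∈ e)).card ≤ 2

/-- A permutation `(i_1, …, i_d) = (σ 0, …, σ (d-1))` is compatible with a vine on
`Fin d`: for every `k` there is an edge of tree `k` with conditioned set
`{σ k, σ r}` (some `r < k`) and conditioning set `{σ 0, …, σ (k-1)} \ {σ r}`. -/
def Compatible {d : ℕ} (𝒱 : RegularVine (Fin d)) (σ : Fin d → Fin d) : Prop :=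
  ∀ k : Fin d, 1 ≤ (k : ℕ) → ∃ r : Fin d, r < k ∧ ∃ e ∈ 𝒱.E (k : ℕ),
    condPair e = {σ k, σ r} ∧
    condSet e = ((Finset.univ.filter (fun s : Fin d => s < k)).image σ).erase (σ r)

/-!
Induct on `k`, carrying along that the vertices of tree `k` have `k` elements. An edge of
tree `k + 1` joins two distinct `(k + 1)`-sets, and by proximity they share a vertex of tree
`k`, a `k`-set; two distinct `(k + 1)`-sets with `k` common elements have a `(k + 2)`-set as
union. For `k = 1` the endpoints are distinct singletons.
-/

theorem Finset.card_union_eq_add_two_of_le_card_inter {β : Type*} [DecidableEq β]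
    {A B : Finset β} {n : ℕ} (hA : #A = n + 1) (hB : #B = n + 1) (hne : A ≠ B)
    (hn : n ≤ #(A ∩ B)) : #(A ∪ B) = n + 2 := by
  have hinter : #(A ∩ B) ≠ n + 1 := fun h => hne <|
    (eq_of_subset_of_card_le inter_subset_left (by omega)).symm.trans
      (eq_of_subset_of_card_le inter_subset_right (by omega))
  have := card_union_add_card_inter A B
  have := card_le_card (inter_subset_left (s₁ := A) (s₂ := B))
  omega

theorem subset_eUnion_of_mem {β : Type*} [DecidableEq β] {e : Sym2 (Finset β)}
    {A : Finset β} (h : A ∈ e) : A ⊆ eUnion e := by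
  induction e using Sym2.inductionOn with
  | hf B C =>
    rcases Sym2.mem_iff.1 h with rfl | rfl
    · exact subset_union_left
    · exact subset_union_right

namespace RegularVine

variable (𝒱 : RegularVine α)

theorem ne_of_mk_mem_E {k : ℕ} (hk : 1 ≤ k) (hkd : k + 1 ≤ Fintype.card α)
    {A B : Finset α} (he : s(A, B) ∈ 𝒱.E k) : A ≠ B := by
  simpa [Sym2.mk_isDiag_iff] using (𝒱.tree k hk hkd).2.1 _ he

theorem card_of_mem_V_one : ∀ A ∈ 𝒱.V 1, #A = 1 := by
  simp [𝒱.hV1]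

theorem card_of_mem_V_succ {k : ℕ} (hk : 1 ≤ k)
    (hE : ∀ e ∈ 𝒱.E k, #(eUnion e) = k + 1) : ∀ A ∈ 𝒱.V (k + 1), #A = k + 1 := by
  simpa [𝒱.hVsucc k hk] using hE

theorem card_eUnion_of_mem_E_one (hd : 2 ≤ Fintype.card α) :
    ∀ e ∈ 𝒱.E 1, #(eUnion e) = 2 := by
  intro e he
  induction e using Sym2.inductionOn with
  | hf A B =>
    have hsub := (𝒱.tree 1 le_rfl hd).1 _ he
    exact card_union_eq_add_two_of_le_card_inter
      (𝒱.card_of_mem_V_one A (hsub A (Sym2.mem_mk_left A B)))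
      (𝒱.card_of_mem_V_one B (hsub B (Sym2.mem_mk_right A B)))
      (𝒱.ne_of_mk_mem_E le_rfl hd he) (Nat.zero_le _)

theorem card_eUnion_of_mem_E_succ {k : ℕ} (hk : 1 ≤ k) (hkd : k + 2 ≤ Fintype.card α)
    (hV : ∀ A ∈ 𝒱.V k, #A = k) (hE : ∀ e ∈ 𝒱.E k, #(eUnion e) = k + 1) :
    ∀ e ∈ 𝒱.E (k + 1), #(eUnion e) = k + 2 := by
  intro e he
  obtain ⟨a, ha, b, hb, rfl, v, hva, hvb⟩ := 𝒱.proximity k hk e he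
  have hv : #v = k := hV v ((𝒱.tree k hk (by omega)).1 a ha v hva)
  have hshared : v ⊆ eUnion a ∩ eUnion b :=
    subset_inter (subset_eUnion_of_mem hva) (subset_eUnion_of_mem hvb)
  exact card_union_eq_add_two_of_le_card_inter (hE a ha) (hE b hb)
    (𝒱.ne_of_mk_mem_E (by omega) (by omega) he) (hv ▸ card_le_card hshared)

theorem card_of_mem_V_and_card_eUnion_of_mem_E {k : ℕ} (hk : 1 ≤ k)
    (hkd : k + 1 ≤ Fintype.card α) :
    (∀ A ∈ 𝒱.V k, #A = k) ∧ ∀ e ∈ 𝒱.E k, #(eUnion e) = k + 1 := by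
  induction k, hk using Nat.le_induction with
  | base => exact ⟨𝒱.card_of_mem_V_one, 𝒱.card_eUnion_of_mem_E_one hkd⟩
  | succ k hk ih =>
    obtain ⟨hV, hE⟩ := ih (by omega)
    exact ⟨𝒱.card_of_mem_V_succ hk hE, 𝒱.card_eUnion_of_mem_E_succ hk hkd hV hE⟩

end RegularVine

/-- For every edge `e ∈ E_k` of a regular vine on `d` elements, the complete union
`U_e` of `e` has exactly `k + 1` elements. -/
theorem vine_completeUnion_card {d : ℕ} (𝒱 : RegularVine (Fin d)) :
    ∀ k, 1 ≤ k → k ≤ d - 1 → ∀ e ∈ 𝒱.E k, (eUnion e).card = k + 1 := by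
  intro k hk hkd
  exact (𝒱.card_of_mem_V_and_card_eUnion_of_mem_E hk (by rw [Fintype.card_fin]; omega)).2
end

section
/- Let Q be the inverse survival function of a nonnegative random variable Y (i.e., Q(u) = inf{y : P(Y > y) ≤ u}). If a sequence β(t) ∈ [0,1] satisfies β(t) = O(b^t) for some b ∈ (0,1) and E[Y² ln(1+Y)] < ∞, then Σ_{t=0}^∞ ∫_0^{β(t)} Q²(u) du < ∞. -/
/-!
Swapping sum and integral, `∑ₜ ∫₀^{β t} Q² = ∫₀¹ #{t | u ≤ β t} Q(u)² du`, and geometric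
decay bounds the count by `K (1 + log (1/u))`. Splitting at `Q(u) = 2 u^{-1/4}` gives
`(1 + log (1/u)) Q² ≤ 16 u^{-3/4} + 5 Q² log (1 + Q)`, and
`∫₀¹ Q² log (1 + Q) ≤ E[Y² log (1 + Y)]` because `Q` on `(0, 1)` is stochastically dominated
by `Y`.
-/

open MeasureTheory

variable {Ω : Type*} [MeasurableSpace Ω]

/-- Inverse survival function of `Y`: `Q(u) = inf { y : P(Y > y) ≤ u }`. -/
noncomputable def invSurvival (μ : Measure Ω) (Y : Ω → ℝ) (u : ℝ) : ℝ :=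
  sInf {y : ℝ | (μ {ω | Y ω > y}).toReal ≤ u}

open Set Filter Topology
open scoped Finset ENNReal

section InvSurvival

variable {μ : Measure Ω} [IsProbabilityMeasure μ] {Y : Ω → ℝ} {u y : ℝ}

lemma invSurvival_of_one_le (hu : 1 ≤ u) : invSurvival μ Y u = 0 := by
  have huniv : {y : ℝ | (μ {ω | Y ω > y}).toReal ≤ u} = univ :=
    eq_univ_of_forall fun y =>
      (ENNReal.toReal_le_of_le_ofReal zero_le_one (by simpa using prob_le_one)).trans hu
  rw [invSurvival, huniv, Real.sInf_univ]

lemma setOf_survival_le_subset_Ici (hY0 : ∀ ω, 0 ≤ Y ω) (hu : u < 1) :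
    {y : ℝ | (μ {ω | Y ω > y}).toReal ≤ u} ⊆ Ici 0 := by
  intro y hy
  by_contra hneg
  have huniv : {ω | Y ω > y} = univ :=
    eq_univ_of_forall fun ω => (not_le.1 hneg).trans_le (hY0 ω)
  have hy' : (μ {ω | Y ω > y}).toReal ≤ u := hy
  rw [huniv, measure_univ, ENNReal.toReal_one] at hy'
  linarith

lemma invSurvival_nonneg (hY0 : ∀ ω, 0 ≤ Y ω) (u : ℝ) : 0 ≤ invSurvival μ Y u := by
  rcases lt_or_ge u 1 with hu | hu
  · exact Real.sInf_nonneg fun y hy => setOf_survival_le_subset_Ici hY0 hu hy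
  · rw [invSurvival_of_one_le hu]

lemma invSurvival_le (hY0 : ∀ ω, 0 ≤ Y ω) (hy : 0 ≤ y) (h : (μ {ω | Y ω > y}).toReal ≤ u) :
    invSurvival μ Y u ≤ y := by
  rcases lt_or_ge u 1 with hu | hu
  · exact csInf_le ⟨0, setOf_survival_le_subset_Ici hY0 hu⟩ h
  · rwa [invSurvival_of_one_le hu]

omit [IsProbabilityMeasure μ] in
lemma exists_survival_le [IsFiniteMeasure μ] (hY : Measurable Y) (hu : 0 < u) :
    ∃ y, (μ {ω | Y ω > y}).toReal ≤ u := by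
  have hempty : ⋂ y : ℝ, {ω | Y ω > y} = ∅ :=
    eq_empty_of_forall_notMem fun ω hω => lt_irrefl (Y ω) (mem_iInter.1 hω (Y ω))
  have hlim : Tendsto (fun y : ℝ => μ {ω | Y ω > y}) atTop (𝓝 0) := by
    have := tendsto_measure_iInter_atTop (μ := μ) (s := fun y : ℝ => {ω | Y ω > y})
      (fun _ => (measurableSet_lt measurable_const hY).nullMeasurableSet)
      (fun _ _ h _ hω => h.trans_lt hω) ⟨0, measure_ne_top _ _⟩
    rwa [hempty, measure_empty] at this
  obtain ⟨y, hy⟩ := (hlim.eventually_lt_const (ENNReal.ofReal_pos.2 hu)).exists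
  exact ⟨y, ENNReal.toReal_le_of_le_ofReal hu.le hy.le⟩

lemma antitoneOn_invSurvival (hY : Measurable Y) (hY0 : ∀ ω, 0 ≤ Y ω) :
    AntitoneOn (invSurvival μ Y) (Ioi 0) := by
  intro u hu v _ huv
  rcases lt_or_ge v 1 with hv | hv
  · exact csInf_le_csInf ⟨0, setOf_survival_le_subset_Ici hY0 hv⟩ (exists_survival_le hY hu)
      fun y hy => hy.trans huv
  · rw [invSurvival_of_one_le hv]
    exact invSurvival_nonneg hY0 u

lemma aemeasurable_invSurvival (hY : Measurable Y) (hY0 : ∀ ω, 0 ≤ Y ω) :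
    AEMeasurable (invSurvival μ Y) (volume.restrict (Ioi 0)) :=
  aemeasurable_restrict_of_antitoneOn measurableSet_Ioi (antitoneOn_invSurvival hY hY0)

lemma restrict_Ioi_setOf_lt_invSurvival_le (hY0 : ∀ ω, 0 ≤ Y ω) (hy : 0 ≤ y) :
    volume.restrict (Ioi 0) {u | y < invSurvival μ Y u} ≤ μ {ω | y < Y ω} :=
  calc volume.restrict (Ioi 0) {u | y < invSurvival μ Y u}
      ≤ volume (Ioo 0 (μ {ω | Y ω > y}).toReal) := by
        rw [Measure.restrict_apply' measurableSet_Ioi]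
        refine measure_mono fun u ⟨hyu, hu⟩ => ⟨hu, ?_⟩
        by_contra h
        exact (invSurvival_le hY0 hy (not_lt.1 h)).not_gt hyu
    _ = μ {ω | y < Y ω} := by
        rw [Real.volume_Ioo, sub_zero, ENNReal.ofReal_toReal (measure_ne_top _ _)]

theorem lintegral_comp_invSurvival_le {g : ℝ → ℝ} (hg : Measurable g)
    (hg_cont : ContinuousOn g (Ici 0)) (hg_mono : StrictMonoOn g (Ici 0)) (hg0 : g 0 = 0)
    (hg_top : Tendsto g atTop atTop) (hY : Measurable Y) (hY0 : ∀ ω, 0 ≤ Y ω) :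
    ∫⁻ u in Ioi 0, ENNReal.ofReal (g (invSurvival μ Y u)) ≤
      ∫⁻ ω, ENNReal.ofReal (g (Y ω)) ∂μ := by
  have hg_nonneg : ∀ x, 0 ≤ x → 0 ≤ g x := fun x hx =>
    hg0 ▸ hg_mono.monotoneOn self_mem_Ici hx hx
  rw [lintegral_eq_lintegral_meas_lt _
      (ae_of_all _ fun u => hg_nonneg _ (invSurvival_nonneg hY0 u))
      (hg.comp_aemeasurable (aemeasurable_invSurvival hY hY0)),
    lintegral_eq_lintegral_meas_lt _ (ae_of_all _ fun ω => hg_nonneg _ (hY0 ω))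
      (hg.comp hY).aemeasurable]
  refine setLIntegral_mono' measurableSet_Ioi fun s hs => ?_
  obtain ⟨y, hy, rfl⟩ :=
    intermediate_value_Ici hg_cont hg_top (by rw [hg0]; exact le_of_lt (mem_Ioi.1 hs))
  have hlt : ∀ x, 0 ≤ x → (g y < g x ↔ y < x) := fun x hx => hg_mono.lt_iff_lt hy hx
  calc volume.restrict (Ioi 0) {u | g y < g (invSurvival μ Y u)}
      = volume.restrict (Ioi 0) {u | y < invSurvival μ Y u} := by
        congr 1; ext u; exact hlt _ (invSurvival_nonneg hY0 u)
    _ ≤ μ {ω | y < Y ω} := restrict_Ioi_setOf_lt_invSurvival_le hY0 hy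
    _ = μ {ω | g y < g (Y ω)} := by
        congr 1; ext ω; exact (hlt _ (hY0 ω)).symm

end InvSurvival

lemma card_filter_le_of_le_geometric {β : ℕ → ℝ} {b C u : ℝ} (hb0 : 0 < b) (hb1 : b < 1)
    (hβ : ∀ t, β t ≤ C * b ^ t) (hu : 0 < u) (huC : u ≤ C) (n : ℕ) :
    (#{t ∈ Finset.range n | u ≤ β t} : ℝ) ≤ 1 + Real.log (C / u) / Real.log b⁻¹ := by
  set R := Real.log (C / u) / Real.log b⁻¹
  have hC : 0 < C := hu.trans_le huC
  have hL : 0 < Real.log b⁻¹ := Real.log_pos (one_lt_inv₀ hb0 |>.2 hb1)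
  have hR : 0 ≤ R := div_nonneg (Real.log_nonneg ((one_le_div hu).2 huC)) hL.le
  have hsub : {t ∈ Finset.range n | u ≤ β t} ⊆ Finset.range (⌊R⌋₊ + 1) := by
    intro t ht
    have hut : u ≤ C * b ^ t := (Finset.mem_filter.1 ht).2.trans (hβ t)
    have hlog := Real.log_le_log hu hut
    rw [Real.log_mul hC.ne' (pow_pos hb0 t).ne', Real.log_pow] at hlog
    have htR : (t : ℝ) ≤ R := by
      rw [le_div_iff₀ hL, Real.log_inv, Real.log_div hC.ne' hu.ne']
      linarith
    exact Finset.mem_range.2 (Nat.lt_succ_of_le (Nat.le_floor htR))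
  calc (#{t ∈ Finset.range n | u ≤ β t} : ℝ) ≤ (⌊R⌋₊ + 1 : ℕ) := by
        exact_mod_cast (Finset.card_le_card hsub).trans (Finset.card_range _).le
    _ ≤ 1 + R := by push_cast; linarith [Nat.floor_le hR]

lemma exists_card_filter_le_mul_one_sub_log {β : ℕ → ℝ} {b C : ℝ} (hb0 : 0 < b) (hb1 : b < 1)
    (hβ : ∀ t, β t ≤ C * b ^ t) :
    ∃ K, 0 ≤ K ∧ ∀ u ∈ Ioc (0 : ℝ) 1, ∀ n,
      (#{t ∈ Finset.range n | u ≤ β t} : ℝ) ≤ K * (1 - Real.log u) := by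
  set C' := max C 1
  set L := Real.log b⁻¹
  have hL : 0 < L := Real.log_pos (one_lt_inv₀ hb0 |>.2 hb1)
  have hC' : 0 ≤ Real.log C' := Real.log_nonneg (le_max_right _ _)
  have hβ' : ∀ t, β t ≤ C' * b ^ t := fun t =>
    (hβ t).trans (mul_le_mul_of_nonneg_right (le_max_left _ _) (pow_nonneg hb0.le t))
  refine ⟨1 + (Real.log C' + 1) / L, by positivity, fun u ⟨hu0, hu1⟩ n => ?_⟩
  have hlogu : 0 ≤ -Real.log u := neg_nonneg.2 (Real.log_nonpos hu0.le hu1)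
  calc (#{t ∈ Finset.range n | u ≤ β t} : ℝ)
      ≤ 1 + Real.log (C' / u) / L :=
        card_filter_le_of_le_geometric hb0 hb1 hβ' hu0 (hu1.trans (le_max_right _ _)) n
    _ = 1 + Real.log C' / L + -Real.log u / L := by
        rw [Real.log_div (by positivity) hu0.ne']; ring
    _ ≤ (1 + (Real.log C' + 1) / L) * (1 - Real.log u) := by
        have hlogu_div : -Real.log u / L ≤ -Real.log u * ((Real.log C' + 1) / L) := by
          rw [mul_div_assoc', div_le_div_iff_of_pos_right hL]
          nlinarith
        have hlogC_div : Real.log C' / L ≤ (Real.log C' + 1) / L := by gcongr; linarith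
        nlinarith

/-- The split is at `q = 2 u^{-1/4}`: below it `q²` is small, above it `-log u ≤ 4 log (1 + q)`. -/
lemma one_sub_log_mul_sq_le {u q : ℝ} (hu0 : 0 < u) (hu1 : u ≤ 1) (hq : 0 ≤ q) :
    (1 - Real.log u) * q ^ 2 ≤ 16 * u ^ (-3 / 4 : ℝ) + 5 * (q ^ 2 * Real.log (1 + q)) := by
  set v := u ^ (-1 / 4 : ℝ)
  have hv0 : 0 < v := Real.rpow_pos_of_pos hu0 _
  have hv1 : 1 ≤ v := Real.one_le_rpow_of_pos_of_le_one_of_nonpos hu0 hu1 (by norm_num)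
  have hlogv : Real.log v = -1 / 4 * Real.log u := Real.log_rpow hu0 _
  rcases le_or_gt q (2 * v) with hqv | hqv
  · have hv3 : v ^ 3 = u ^ (-3 / 4 : ℝ) := by
      rw [← Real.rpow_natCast, ← Real.rpow_mul hu0.le]; norm_num
    have hlog : 1 - Real.log u ≤ 4 * v := by
      linarith [Real.log_le_sub_one_of_pos hv0]
    have hq2 : q ^ 2 ≤ 4 * v ^ 2 := by nlinarith
    calc (1 - Real.log u) * q ^ 2 ≤ 4 * v * (4 * v ^ 2) :=
          mul_le_mul hlog hq2 (sq_nonneg q) (by positivity)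
      _ = 16 * u ^ (-3 / 4 : ℝ) := by rw [← hv3]; ring
      _ ≤ _ := le_add_of_nonneg_right
          (mul_nonneg (by norm_num) (mul_nonneg (sq_nonneg q) (Real.log_nonneg (by linarith))))
  · have hlog : 1 ≤ Real.log (1 + q) := by
      rw [Real.le_log_iff_exp_le (by linarith)]
      linarith [Real.exp_one_lt_d9]
    have hvq : Real.log v ≤ Real.log (1 + q) := Real.log_le_log hv0 (by linarith)
    calc (1 - Real.log u) * q ^ 2 ≤ 5 * Real.log (1 + q) * q ^ 2 :=
          mul_le_mul_of_nonneg_right (by linarith) (sq_nonneg q)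
      _ = 5 * (q ^ 2 * Real.log (1 + q)) := by ring
      _ ≤ _ := le_add_of_nonneg_left (by positivity)

lemma strictMonoOn_sq_mul_log_one_add :
    StrictMonoOn (fun y : ℝ => y ^ 2 * Real.log (1 + y)) (Ici 0) := by
  intro a ha c _ hac
  calc a ^ 2 * Real.log (1 + a) ≤ a ^ 2 * Real.log (1 + c) :=
        mul_le_mul_of_nonneg_left (Real.log_le_log (by linarith [mem_Ici.1 ha]) (by linarith))
          (sq_nonneg a)
    _ < c ^ 2 * Real.log (1 + c) :=
        mul_lt_mul_of_pos_right (pow_lt_pow_left₀ hac ha two_ne_zero)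
          (Real.log_pos (by linarith [mem_Ici.1 ha]))

lemma tendsto_sq_mul_log_one_add_atTop :
    Tendsto (fun y : ℝ => y ^ 2 * Real.log (1 + y)) atTop atTop :=
  (tendsto_pow_atTop (n := 2) (by norm_num)).atTop_mul_atTop₀
    (Real.tendsto_log_atTop.comp (tendsto_atTop_add_const_left _ 1 tendsto_id))

lemma lintegral_Ioc_one_sub_log_mul_sq_invSurvival_lt_top {μ : Measure Ω}
    [IsProbabilityMeasure μ] {Y : Ω → ℝ} (hY : Measurable Y) (hY0 : ∀ ω, 0 ≤ Y ω)
    (hmom : Integrable (fun ω => Y ω ^ 2 * Real.log (1 + Y ω)) μ) :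
    ∫⁻ u in Ioc 0 1, ENNReal.ofReal (1 - Real.log u) * ENNReal.ofReal (invSurvival μ Y u ^ 2)
      < ⊤ := by
  set g := fun y : ℝ => y ^ 2 * Real.log (1 + y)
  have hg : Measurable g := by fun_prop
  have hg_cont : ContinuousOn g (Ici 0) := by
    refine (continuous_pow 2).continuousOn.mul (ContinuousOn.log (by fun_prop) fun y hy => ?_)
    linarith [mem_Ici.1 hy]
  have hg_nonneg : ∀ {y}, 0 ≤ y → 0 ≤ g y := fun hy =>
    mul_nonneg (sq_nonneg _) (Real.log_nonneg (by linarith))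
  have hrpow : IntegrableOn (fun u : ℝ => 16 * u ^ (-3 / 4 : ℝ)) (Ioc 0 1) :=
    ((intervalIntegrable_iff_integrableOn_Ioc_of_le zero_le_one).1
      (intervalIntegral.intervalIntegrable_rpow' (by norm_num))).const_mul 16
  have hgQ : ∫⁻ u in Ioc 0 1, ENNReal.ofReal (g (invSurvival μ Y u)) < ⊤ :=
    ((lintegral_mono_set Ioc_subset_Ioi_self).trans
      (lintegral_comp_invSurvival_le (μ := μ) hg hg_cont strictMonoOn_sq_mul_log_one_add
        (by simp [g]) tendsto_sq_mul_log_one_add_atTop hY hY0)).trans_lt hmom.lintegral_lt_top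
  calc ∫⁻ u in Ioc 0 1,
        ENNReal.ofReal (1 - Real.log u) * ENNReal.ofReal (invSurvival μ Y u ^ 2)
      ≤ ∫⁻ u in Ioc 0 1, (ENNReal.ofReal (16 * u ^ (-3 / 4 : ℝ)) +
          ENNReal.ofReal 5 * ENNReal.ofReal (g (invSurvival μ Y u))) := by
        refine setLIntegral_mono' measurableSet_Ioc fun u ⟨hu0, hu1⟩ => ?_
        rw [← ENNReal.ofReal_mul (by linarith [Real.log_nonpos hu0.le hu1]),
          ← ENNReal.ofReal_mul (by norm_num), ← ENNReal.ofReal_add (by positivity)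
            (by have := hg_nonneg (invSurvival_nonneg (μ := μ) hY0 u); positivity)]
        exact ENNReal.ofReal_le_ofReal
          (one_sub_log_mul_sq_le hu0 hu1 (invSurvival_nonneg hY0 u))
    _ = (∫⁻ u in Ioc 0 1, ENNReal.ofReal (16 * u ^ (-3 / 4 : ℝ))) +
          ENNReal.ofReal 5 * ∫⁻ u in Ioc 0 1, ENNReal.ofReal (g (invSurvival μ Y u)) := by
        rw [lintegral_add_left (by fun_prop), lintegral_const_mul' _ _ ENNReal.ofReal_ne_top]
    _ < ⊤ := ENNReal.add_lt_top.2 ⟨hrpow.lintegral_lt_top,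
          ENNReal.mul_lt_top ENNReal.ofReal_lt_top hgQ⟩

lemma tsum_setLIntegral_Ioc_le {β : ℕ → ℝ} (hβ1 : ∀ t, β t ≤ 1) {W : ℝ → ℝ≥0∞}
    (hW : AEMeasurable W (volume.restrict (Ioi 0))) {N : ℝ → ℝ}
    (hN : ∀ u ∈ Ioc (0 : ℝ) 1, ∀ n, (#{t ∈ Finset.range n | u ≤ β t} : ℝ) ≤ N u) :
    ∑' t, ∫⁻ u in Ioc 0 (β t), W u ≤ ∫⁻ u in Ioc 0 1, ENNReal.ofReal (N u) * W u := by
  have hsub : ∀ t, Ioc 0 (β t) ⊆ Ioc 0 1 := fun t => Ioc_subset_Ioc_right (hβ1 t)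
  simp_rw [← lintegral_indicator measurableSet_Ioc]
  rw [← lintegral_tsum fun t => (aemeasurable_indicator_iff measurableSet_Ioc).2
    (hW.mono_measure (Measure.restrict_mono Ioc_subset_Ioi_self le_rfl))]
  refine lintegral_mono fun u => ?_
  by_cases hu : u ∈ Ioc 0 1
  · rw [indicator_of_mem hu]
    refine ENNReal.tsum_le_of_sum_range_le fun n => ?_
    have hind : ∀ t, (Ioc 0 (β t)).indicator W u = if u ≤ β t then W u else 0 := fun t =>
      by simp [indicator_apply, hu.1]
    simp_rw [hind]
    rw [← Finset.sum_filter, Finset.sum_const, nsmul_eq_mul, ← ENNReal.ofReal_natCast]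
    exact mul_le_mul_left (ENNReal.ofReal_le_ofReal (hN u hu n)) _
  · simp [indicator_of_notMem fun h => hu (hsub _ h), indicator_of_notMem hu]

/-- Geometric mixing case of the mixing–moment trade-off: if `β(t) = O(bᵗ)` for some
`b ∈ (0,1)`, `β(t) ∈ [0,1]`, and `E[Y² ln(1+Y)] < ∞` for a nonnegative random
variable `Y` with inverse survival function `Q`, then
`Σ_{t=0}^∞ ∫_0^{β(t)} Q²(u) du < ∞`. -/
theorem geometric_mixing_summable
    (μ : Measure Ω) [IsProbabilityMeasure μ] (Y : Ω → ℝ)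
    (hY : Measurable Y) (hY0 : ∀ ω, 0 ≤ Y ω)
    (β : ℕ → ℝ) (hβ01 : ∀ t, β t ∈ Set.Icc (0 : ℝ) 1)
    (b : ℝ) (hb : b ∈ Set.Ioo (0 : ℝ) 1) (C : ℝ)
    (hgeo : ∀ t, β t ≤ C * b ^ t)
    (hmom : Integrable (fun ω => (Y ω) ^ 2 * Real.log (1 + Y ω)) μ) :
    Summable (fun t => ∫ u in (0 : ℝ)..(β t), (invSurvival μ Y u) ^ 2) := by
  set Q := invSurvival μ Y
  obtain ⟨K, hK, hcount⟩ := exists_card_filter_le_mul_one_sub_log hb.1 hb.2 hgeo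
  have hQ : AEMeasurable Q (volume.restrict (Ioi 0)) := aemeasurable_invSurvival hY hY0
  have hreal : ∀ t, ∫ u in (0 : ℝ)..(β t), Q u ^ 2 =
      (∫⁻ u in Ioc 0 (β t), ENNReal.ofReal (Q u ^ 2)).toReal := fun t => by
    rw [intervalIntegral.integral_of_le (hβ01 t).1, integral_eq_lintegral_of_nonneg_ae
      (ae_of_all _ fun u => sq_nonneg _) ((hQ.mono_measure (Measure.restrict_mono
        Ioc_subset_Ioi_self le_rfl)).pow_const 2).aestronglyMeasurable]
  simp_rw [hreal]
  refine ENNReal.summable_toReal (ne_top_of_le_ne_top ?_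
    (tsum_setLIntegral_Ioc_le (fun t => (hβ01 t).2) (hQ.pow_const 2).ennreal_ofReal hcount))
  simp_rw [ENNReal.ofReal_mul hK, mul_assoc]
  rw [lintegral_const_mul' _ _ ENNReal.ofReal_ne_top]
  exact ENNReal.mul_ne_top ENNReal.ofReal_ne_top
    (lintegral_Ioc_one_sub_log_mul_sq_invSurvival_lt_top hY hY0 hmom).ne
end
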